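/- (Etzion–Silberstein bound for linear Ferrers diagram rank metric codes.) Let F be an a×b Ferrers diagram and d ≥ 1. For each integer i with 0 ≤ i ≤ d−1, let v_i be the number of dots of F not contained in the first i rows and not contained in the rightmost d−1−i columns. If C is an 𝔽_q-linear subspace of the space of a×b matrices over 𝔽_q of dimension p such that every codeword has zero entries at all positions not in F and every nonzero codeword has rank at least d, then p ≤ min_{0≤i≤d−1} v_i. -/

import Mathlib

/-!
A nonzero codeword that vanishes on the cells of `F` lying outside the first `i` rows and the last
`d - 1 - i` columns is a sum of a matrix supported on `i` rows and one supported on `d - 1 - i`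
columns, so its rank is at most `d - 1`. Hence projecting the code onto those `v_i` cells is
injective, and `p ≤ v_i`.
-/

open Finset Module

namespace Matrix

variable {m n K : Type*} [Fintype n] [Field K]

theorem rank_add_le (A B : Matrix m n K) : (A + B).rank ≤ A.rank + B.rank := by
  have hrange : LinearMap.range (A + B).mulVecLin ≤
      LinearMap.range A.mulVecLin ⊔ LinearMap.range B.mulVecLin := by
    rintro _ ⟨v, rfl⟩
    rw [mulVecLin_add]
    exact Submodule.add_mem_sup ⟨v, rfl⟩ ⟨v, rfl⟩
  exact (Submodule.finrank_mono hrange).trans (Submodule.finrank_add_le_finrank_add_finrank _ _)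

theorem rank_le_card_add_card_of_support [Fintype m] (X : Matrix m n K) (S : Finset m)
    (T : Finset n) (hX : ∀ i j, X i j ≠ 0 → i ∈ S ∨ j ∈ T) : X.rank ≤ #S + #T := by
  classical
  let rowsIn : Matrix m n K := of fun i j => if i ∈ S then X i j else 0
  let rowsOut : Matrix m n K := of fun i j => if i ∈ S then 0 else X i j
  have hsplit : X = rowsIn + rowsOut := by
    ext i j
    by_cases hi : i ∈ S <;> simp [rowsIn, rowsOut, hi]
  have hIn : rowsIn.rank ≤ #S := by
    refine rank_le_card_of_support_subset _ _ fun i hi => ?_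
    by_contra hiS
    exact hi (funext fun j => by simp [rowsIn, row, show i ∉ S from hiS])
  have hOut : rowsOut.rank ≤ #T := by
    rw [← rank_transpose]
    refine rank_le_card_of_support_subset _ _ fun j hj => ?_
    by_contra hjT
    refine hj (funext fun i => ?_)
    by_cases hi : i ∈ S
    · simp [rowsOut, row, hi]
    · simpa [rowsOut, row, hi] using (hX i j).mt (by simp [hi, show j ∉ T from hjT])
  calc X.rank = (rowsIn + rowsOut).rank := by rw [← hsplit]
    _ ≤ #S + #T := (rank_add_le _ _).trans (Nat.add_le_add hIn hOut)

end Matrix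

section RankMetricCode

variable {m n K : Type*} [Fintype m] [Fintype n] [Field K]

theorem finrank_le_card_of_exists_apply_ne_zero (C : Submodule K (Matrix m n K))
    (G : Finset (m × n)) (hG : ∀ X ∈ C, X ≠ 0 → ∃ g ∈ G, X g.1 g.2 ≠ 0) :
    finrank K C ≤ #G := by
  let restrict : C →ₗ[K] (G → K) :=
    { toFun := fun X g => (X : Matrix m n K) g.1.1 g.1.2
      map_add' := fun _ _ => rfl
      map_smul' := fun _ _ => rfl }
  have hinj : Function.Injective restrict := by
    rw [← LinearMap.ker_eq_bot, LinearMap.ker_eq_bot']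
    intro X hX
    by_contra hne
    obtain ⟨g, hg, hXg⟩ := hG X X.2 (by simpa using hne)
    exact hXg (congrFun hX ⟨g, hg⟩)
  simpa using LinearMap.finrank_le_finrank_of_injective hinj

theorem finrank_le_card_of_rank_ge [DecidableEq m] [DecidableEq n]
    (C : Submodule K (Matrix m n K)) (F : Finset (m × n)) (d : ℕ)
    (hsupp : ∀ X ∈ C, ∀ i j, (i, j) ∉ F → X i j = 0)
    (hmin : ∀ X ∈ C, X ≠ 0 → d ≤ X.rank) (S : Finset m) (T : Finset n) (hST : #S + #T < d) :
    finrank K C ≤ #{q ∈ F | q.1 ∉ S ∧ q.2 ∉ T} := by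
  refine finrank_le_card_of_exists_apply_ne_zero C _ fun X hXC hX0 => ?_
  by_contra! hzero
  have hrank : X.rank ≤ #S + #T := by
    refine X.rank_le_card_add_card_of_support S T fun i j hij => ?_
    by_contra! hout
    have hF : (i, j) ∈ F := by_contra fun hF => hij (hsupp X hXC i j hF)
    exact hij (hzero (i, j) (mem_filter.mpr ⟨hF, hout⟩))
  have := hmin X hXC hX0
  omega

end RankMetricCode

theorem Fin.card_filter_sub_le_val_le {b : ℕ} (k : ℕ) : #{c : Fin b | b - k ≤ (c : ℕ)} ≤ k := by
  have hsplit := card_filter_add_card_filter_not (s := univ) (fun c : Fin b => (c : ℕ) < b - k)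
  simp only [not_lt, card_univ, Fintype.card_fin, Fin.card_filter_val_lt] at hsplit
  omega

/-- Etzion–Silberstein bound for linear Ferrers diagram rank metric codes: with
`v_i = |{(r,c) ∈ F : r outside the first i rows, c outside the last d-1-i columns}|`,
any `p`-dimensional `𝔽_q`-linear code of `a × b` matrices supported on the Ferrers
diagram `F` in which every nonzero codeword has rank at least `d` satisfies
`p ≤ min_{0 ≤ i ≤ d-1} v_i`. -/
theorem etzion_silberstein_bound
    (a b d p : ℕ) (K : Type*) [Field K]
    (hd : 1 ≤ d)
    (F : Finset (Fin a × Fin b))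
    (C : Submodule K (Matrix (Fin a) (Fin b) K))
    (hp : Module.finrank K C = p)
    (hsupp : ∀ X ∈ C, ∀ (r : Fin a) (c : Fin b), (r, c) ∉ F → X r c = 0)
    (hmin : ∀ X ∈ C, X ≠ 0 → d ≤ Matrix.rank X) :
    p ≤ (Finset.range d).inf'
      (Finset.nonempty_range_iff.mpr (by omega))
      (fun i => (F.filter
        (fun q => i ≤ (q.1 : ℕ) ∧ (q.2 : ℕ) < b - (d - 1 - i))).card) := by
  refine Finset.le_inf' _ _ fun i hi => ?_
  have hid : i < d := mem_range.mp hi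
  let topRows : Finset (Fin a) := {r | (r : ℕ) < i}
  let rightCols : Finset (Fin b) := {c | b - (d - 1 - i) ≤ (c : ℕ)}
  have hcard : #topRows + #rightCols < d := by
    have hrows : #topRows = min a i := Fin.card_filter_val_lt
    have hcols : #rightCols ≤ d - 1 - i := Fin.card_filter_sub_le_val_le _
    omega
  have hcells : {q ∈ F | q.1 ∉ topRows ∧ q.2 ∉ rightCols} =
      {q ∈ F | i ≤ (q.1 : ℕ) ∧ (q.2 : ℕ) < b - (d - 1 - i)} := by
    ext q
    simp only [topRows, rightCols, mem_filter, mem_univ, true_and, not_lt, not_le]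
  rw [← hp, ← hcells]
  exact finrank_le_card_of_rank_ge C F d hsupp hmin topRows rightCols hcard
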